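/- Let $n \geq 0$, let $H$ be a $(2,d)$-hypergraph with an $(3k+1+n, b)$-subedge hypergrid $U_1, \dots, U_{3k+1+n}, S_1, \dots, S_b$ where $b > \xi'(n,k,d)$ and $|S_j \cap S_{j'} \cap \bigcup_i U_i| \leq n$ for all distinct $j, j'$. Then $H$ has a strong $(3k+1, (3k+1)d+1)$-subedge hypergrid. -/

import Mathlib

open Finset

open scoped Classical

variable {α : Type*}

structure Hypergraph' (α : Type*) where
  verts : Finset α
  edges : Finset (Finset α)
  edge_sub : ∀ e ∈ edges, e ⊆ verts

namespace Hypergraph'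

/-- `U` is a subedge of `H`: it is contained in some hyperedge. -/
def IsSubedge (H : Hypergraph' α) (U : Finset α) : Prop := ∃ e ∈ H.edges, U ⊆ e

/-- `H` is a `(2,d)`-hypergraph: any two distinct edges intersect in at most `d` vertices. -/
def Is2dHypergraph (H : Hypergraph' α) (d : ℕ) : Prop :=
  ∀ e ∈ H.edges, ∀ f ∈ H.edges, e ≠ f → (e ∩ f).card ≤ d

/-- The induced subhypergraph `H[U]`. -/
noncomputable def induce (H : Hypergraph' α) (U : Finset α) : Hypergraph' α where
  verts := U
  edges := (H.edges.image (· ∩ U)).filter (· ≠ ∅)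
  edge_sub := by
    intro e he
    simp only [Finset.mem_filter, Finset.mem_image] at he
    obtain ⟨⟨f, hf, rfl⟩, -⟩ := he
    exact Finset.inter_subset_right

/-- The adjacency graph of a hypergraph: two distinct vertices are adjacent
iff they lie in a common edge. -/
def adjGraph (H : Hypergraph' α) : SimpleGraph α where
  Adj v w := v ≠ w ∧ ∃ e ∈ H.edges, v ∈ e ∧ w ∈ e
  symm := ⟨by rintro v w ⟨hne, e, he, hv, hw⟩; exact ⟨hne.symm, e, he, hw, hv⟩⟩
  loopless := ⟨by rintro v ⟨hne, -⟩; exact hne rfl⟩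

/-- Adjacency in `H` avoiding the vertex set `S` (i.e. adjacency in `H[V(H) \ S]`). -/
def avoidGraph (H : Hypergraph' α) (S : Finset α) : SimpleGraph α where
  Adj v w := v ≠ w ∧ v ∉ S ∧ w ∉ S ∧ ∃ e ∈ H.edges, v ∈ e ∧ w ∈ e
  symm := ⟨by rintro v w ⟨hne, hv, hw, e, he, h1, h2⟩; exact ⟨hne.symm, hw, hv, e, he, h2, h1⟩⟩
  loopless := ⟨by rintro v ⟨hne, -⟩; exact hne rfl⟩

/-- `S` is an `(A,B)`-separator of `H`: no path of `H[V(H) \ S]` joins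
a vertex of `A \ S` to a vertex of `B \ S`. -/
def IsSeparator (H : Hypergraph' α) (A B S : Finset α) : Prop :=
  ∀ a ∈ A, a ∉ S → ∀ b ∈ B, b ∉ S → ¬ (H.avoidGraph S).Reachable a b

/-- `U` has an edge cover of weight at most `k` (edge cover number `ρ(U) ≤ k`). -/
def CoverLE (H : Hypergraph' α) (U : Finset α) (k : ℕ) : Prop :=
  ∃ F : Finset (Finset α), F ⊆ H.edges ∧ U ⊆ F.biUnion id ∧ F.card ≤ k

/-- `(T, B)` is a tree decomposition of `H`. -/
def IsTreeDecomp (H : Hypergraph' α) {ι : Type*} (T : SimpleGraph ι) (B : ι → Finset α) : Prop :=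
  T.IsTree ∧ (∀ u, B u ⊆ H.verts) ∧ (∀ e ∈ H.edges, ∃ u, e ⊆ B u) ∧
  (∀ v ∈ H.verts, (T.induce {u | v ∈ B u}).Connected)

/-- Generalised hypertree width of `H` is at most `k`. -/
def ghwLE (H : Hypergraph' α) (k : ℕ) : Prop :=
  ∃ (ι : Type) (T : SimpleGraph ι) (B : ι → Finset α),
    H.IsTreeDecomp T B ∧ ∀ u, H.CoverLE (B u) k

/-- Two subedges are incompatible if their union is not a subedge. -/
def Incompatible (H : Hypergraph' α) (X Y : Finset α) : Prop := ¬ H.IsSubedge (X ∪ Y)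

/-- `U₁,…,U_a, S₁,…,S_b` form an `(a,b)` subedge hypergrid (shyg). -/
def IsShyg (H : Hypergraph' α) {a b : ℕ} (U : Fin a → Finset α) (S : Fin b → Finset α) : Prop :=
  (∀ i, H.IsSubedge (U i)) ∧ (∀ j, H.IsSubedge (S j)) ∧
  (∀ i i', i ≠ i' → H.Incompatible (U i) (U i')) ∧
  (∀ j j', j ≠ j' → H.Incompatible (S j) (S j')) ∧
  (∀ i j, H.Incompatible (U i) (S j)) ∧
  (∀ i i', i ≠ i' → Disjoint (U i) (U i')) ∧
  (∀ j i, (S j ∩ U i).Nonempty)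

/-- A strong shyg: additionally the `S j` intersect pairwise disjointly inside `⋃ U i`. -/
def IsStrongShyg (H : Hypergraph' α) {a b : ℕ}
    (U : Fin a → Finset α) (S : Fin b → Finset α) : Prop :=
  H.IsShyg U S ∧ ∀ j j', j ≠ j' → S j ∩ S j' ∩ Finset.univ.biUnion U = ∅

/-- `H` has a strong `(a,b)`-shyg. -/
def HasStrongShyg (H : Hypergraph' α) (a b : ℕ) : Prop :=
  ∃ (U : Fin a → Finset α) (S : Fin b → Finset α), H.IsStrongShyg U S

/-- `ext(C, E')`: the edges of `E'` meeting `C`. -/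
noncomputable def ext (E' : Finset (Finset α)) (C : Finset α) : Finset (Finset α) :=
  E'.filter fun e => (e ∩ C).Nonempty

/-- `C` is (the vertex set of) a connected component of `H`. -/
def IsConnComp (H : Hypergraph' α) (C : Finset α) : Prop :=
  ∃ v ∈ H.verts, ∀ w, w ∈ C ↔ w ∈ H.verts ∧ H.adjGraph.Reachable v w

end Hypergraph'

/-- The vertex set of `T_{x,Y}`: the union of all paths of `G` starting at `x`
whose second vertex belongs to `Y`. -/
def subtreeVerts {V : Type*} (G : SimpleGraph V) (x : V) (Y : Set V) : Set V :=
  {v | v = x ∨ ∃ w : G.Walk x v, w.IsPath ∧ w.getVert 1 ∈ Y ∧ ¬ w.Nil}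

/-- The tree `T⁺_{t,Y}`: the restriction of `T` to `s` together with a fresh node `none`
made adjacent to `t`. -/
def plusGraph {ι : Type*} (T : SimpleGraph ι) (s : Set ι) (t : ι) :
    SimpleGraph (Option s) where
  Adj a b :=
    (∃ u v : s, a = some u ∧ b = some v ∧ T.Adj u v) ∨
    (a = none ∧ ∃ v : s, b = some v ∧ (v : ι) = t) ∨
    (b = none ∧ ∃ u : s, a = some u ∧ (u : ι) = t)
  symm := ⟨by
    rintro a b (⟨u, v, rfl, rfl, h⟩ | ⟨rfl, v, rfl, hv⟩ | ⟨rfl, u, rfl, hu⟩)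
    · exact Or.inl ⟨v, u, rfl, rfl, h.symm⟩
    · exact Or.inr (Or.inr ⟨rfl, v, rfl, hv⟩)
    · exact Or.inr (Or.inl ⟨rfl, u, rfl, hu⟩)⟩
  loopless := ⟨by
    rintro a (⟨u, v, rfl, h1, h2⟩ | ⟨rfl, v, h, -⟩ | ⟨rfl, u, h, -⟩)
    · obtain rfl : u = v := Option.some_injective _ h1
      exact T.irrefl h2
    · exact Option.some_ne_none _ h.symm
    · exact Option.some_ne_none _ h.symm⟩

/-- Restricting a shyg along injective reindexings gives a shyg. -/
theorem Hypergraph'.IsShyg.restrict {α : Type*} {H : Hypergraph' α} {a b a' b' : ℕ}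
    {U : Fin a → Finset α} {S : Fin b → Finset α}
    {f : Fin a' → Fin a} {g : Fin b' → Fin b}
    (h : H.IsShyg U S) (hf : Function.Injective f) (hg : Function.Injective g) :
    H.IsShyg (fun i => U (f i)) (fun j => S (g j)) := by
  obtain ⟨h1, h2, h3, h4, h5, h6, h7⟩ := h
  exact ⟨fun i => h1 _, fun j => h2 _,
    fun i i' hii => h3 _ _ (fun e => hii (hf e)),
    fun j j' hjj => h4 _ _ (fun e => hjj (hg e)),
    fun i j => h5 _ _,
    fun i i' hii => h6 _ _ (fun e => hii (hf e)),
    fun j i => h7 _ _⟩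

/-- Two incompatible subedges of a `(2,d)`-hypergraph intersect in at most `d` vertices. -/
theorem card_inter_le_of_incompatible {α : Type*} {H : Hypergraph' α} {d : ℕ}
    (h2d : H.Is2dHypergraph d) {X Y : Finset α} (hX : H.IsSubedge X) (hY : H.IsSubedge Y)
    (hinc : H.Incompatible Y X) : (X ∩ Y).card ≤ d := by
  obtain ⟨e, he, hxe⟩ := hX
  obtain ⟨f, hf, hyf⟩ := hY
  have hef : e ≠ f := by
    rintro rfl
    exact hinc ⟨e, he, Finset.union_subset hyf hxe⟩
  exact le_trans (Finset.card_le_card (Finset.inter_subset_inter hxe hyf)) (h2d e he f hf hef)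

/-- `ξ'(n,k,d)` from the paper. -/
def xi' (k d : ℕ) : ℕ → ℕ
  | 0 => (3*k+1)*d+1
  | n+1 => ((3*k+1)*d)^2 * xi' k d n + 1
theorem strong_shyg_of_shyg {α : Type*} (H : Hypergraph' α) (d k n b : ℕ)
    (h2d : H.Is2dHypergraph d)
    (U : Fin (3 * k + 1 + n) → Finset α) (S : Fin b → Finset α)
    (hshyg : H.IsShyg U S) (hb : xi' k d n < b)
    (hint : ∀ j j', j ≠ j' →
      (S j ∩ S j' ∩ Finset.univ.biUnion U).card ≤ n) :
    H.HasStrongShyg (3 * k + 1) ((3 * k + 1) * d + 1) := by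
  classical
  induction n generalizing b with
  | zero =>
    have hble : (3 * k + 1) * d + 1 ≤ b := by
      have : xi' k d 0 = (3 * k + 1) * d + 1 := rfl
      omega
    refine ⟨U, fun j => S (Fin.castLE hble j),
      hshyg.restrict Function.injective_id (Fin.castLE_injective hble), ?_⟩
    intro j j' hjj
    have h0 : (S (Fin.castLE hble j) ∩ S (Fin.castLE hble j') ∩
        Finset.univ.biUnion U).card ≤ 0 :=
      hint _ _ (fun e => hjj (Fin.castLE_injective hble e))
    have h0' := Finset.card_eq_zero.mp (Nat.le_zero.mp h0)
    exact h0'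
  | succ n ih =>
    have hbD : ((3 * k + 1) * d) ^ 2 * xi' k d n + 1 < b := by
      have : xi' k d (n + 1) = ((3 * k + 1) * d) ^ 2 * xi' k d n + 1 := rfl
      omega
    set D := (3 * k + 1) * d with hD
    have h1 : 3 * k + 1 ≤ 3 * k + 1 + (n + 1) := by omega
    set W : Finset α := Finset.univ.biUnion (fun i : Fin (3 * k + 1) => U (Fin.castLE h1 i))
      with hWdef
    set T : Fin b → Finset α := fun j => S j ∩ W with hTdef
    -- each T j has at most D elements
    have hTcard : ∀ j, (T j).card ≤ D := by
      intro j
      have hTeq : T j = Finset.univ.biUnion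
          (fun i : Fin (3 * k + 1) => S j ∩ U (Fin.castLE h1 i)) := by
        ext x
        simp only [hTdef, hWdef, Finset.mem_inter, Finset.mem_biUnion, Finset.mem_univ,
          true_and]
        tauto
      calc (T j).card ≤ ∑ i : Fin (3 * k + 1), (S j ∩ U (Fin.castLE h1 i)).card := by
            rw [hTeq]; exact Finset.card_biUnion_le
        _ ≤ ∑ _i : Fin (3 * k + 1), d := Finset.sum_le_sum (fun i _ =>
            card_inter_le_of_incompatible h2d (hshyg.2.1 j) (hshyg.1 _)
              (hshyg.2.2.2.2.1 _ j))
        _ = D := by simp [hD, Finset.sum_const, mul_comm]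
    -- each T j is nonempty
    have hTne : ∀ j, (T j).Nonempty := by
      intro j
      obtain ⟨x, hx⟩ := hshyg.2.2.2.2.2.2 j (Fin.castLE h1 ⟨0, by omega⟩)
      simp only [Finset.mem_inter] at hx
      refine ⟨x, ?_⟩
      simp only [hTdef, Finset.mem_inter, hWdef, Finset.mem_biUnion, Finset.mem_univ, true_and]
      exact ⟨hx.1, ⟨0, by omega⟩, hx.2⟩
    have hTsubS : ∀ j, T j ⊆ S j := fun j => Finset.inter_subset_left
    have hTsubW : ∀ j, T j ⊆ W := fun j => Finset.inter_subset_right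
    -- a maximal pairwise-disjoint family
    set P : Finset (Fin b) → Prop :=
      fun J => ∀ j ∈ J, ∀ j' ∈ J, j ≠ j' → Disjoint (T j) (T j') with hP
    have hmemP : ((Finset.univ : Finset (Fin b)).powerset.filter P).Nonempty :=
      ⟨∅, by simp [hP]⟩
    obtain ⟨J, hJmem, hJmax⟩ := Finset.exists_max_image _ Finset.card hmemP
    have hJP : P J := (Finset.mem_filter.mp hJmem).2
    by_cases hJbig : D + 1 ≤ J.card
    · -- found D+1 pairwise disjoint T's: done
      obtain ⟨J', hJ'sub, hJ'card⟩ := Finset.exists_subset_card_eq hJbig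
      set g : Fin (D + 1) → Fin b := fun i => ↑(J'.orderIsoOfFin hJ'card i) with hg
      have hginj : Function.Injective g := fun x y hxy =>
        (J'.orderIsoOfFin hJ'card).injective (Subtype.coe_injective hxy)
      have hgmem : ∀ i, g i ∈ J := fun i => hJ'sub (J'.orderIsoOfFin hJ'card i).2
      refine ⟨fun i => U (Fin.castLE h1 i), fun j => S (g j),
        hshyg.restrict (Fin.castLE_injective h1) hginj, ?_⟩
      intro j j' hjj
      have hne : g j ≠ g j' := fun e => hjj (hginj e)
      have hdisj : Disjoint (T (g j)) (T (g j')) := hJP _ (hgmem j) _ (hgmem j') hne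
      apply Finset.eq_empty_of_forall_notMem
      intro x hx
      simp only [Finset.mem_inter, Finset.mem_biUnion, Finset.mem_univ, true_and] at hx
      obtain ⟨⟨hx1, hx2⟩, i, hxi⟩ := hx
      have hxW : x ∈ W := by
        simp only [hWdef, Finset.mem_biUnion, Finset.mem_univ, true_and]
        exact ⟨i, hxi⟩
      exact Finset.disjoint_left.mp hdisj
        (by simp only [hTdef, Finset.mem_inter]; exact ⟨hx1, hxW⟩)
        (by simp only [hTdef, Finset.mem_inter]; exact ⟨hx2, hxW⟩)
    · -- maximal family small: pigeonhole on a common point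
      push_neg at hJbig
      set X : Finset α := J.biUnion T with hX
      have hXcard : X.card ≤ D * D := by
        calc X.card ≤ ∑ j ∈ J, (T j).card := Finset.card_biUnion_le
          _ ≤ ∑ _j ∈ J, D := Finset.sum_le_sum (fun j _ => hTcard j)
          _ = J.card * D := by simp [Finset.sum_const, mul_comm]
          _ ≤ D * D := Nat.mul_le_mul_right _ (by omega)
      have hmeet : ∀ j, (T j ∩ X).Nonempty := by
        intro j
        by_cases hjJ : j ∈ J
        · obtain ⟨x, hx⟩ := hTne j
          exact ⟨x, Finset.mem_inter.mpr ⟨hx, Finset.mem_biUnion.mpr ⟨j, hjJ, hx⟩⟩⟩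
        · by_contra hcon
          have hdisj : ∀ j' ∈ J, Disjoint (T j) (T j') := by
            intro j' hj'
            rw [Finset.disjoint_left]
            intro x hx hx'
            exact hcon ⟨x, Finset.mem_inter.mpr ⟨hx, Finset.mem_biUnion.mpr ⟨j', hj', hx'⟩⟩⟩
          have hins : insert j J ∈ (Finset.univ : Finset (Fin b)).powerset.filter P := by
            refine Finset.mem_filter.mpr ⟨Finset.mem_powerset.mpr (Finset.subset_univ _), ?_⟩
            intro x hx x' hx' hxx
            rcases Finset.mem_insert.mp hx with h | h
            · rcases Finset.mem_insert.mp hx' with h2 | h2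
              · exact absurd (h.trans h2.symm) hxx
              · subst h; exact hdisj x' h2
            · rcases Finset.mem_insert.mp hx' with h2 | h2
              · subst h2; exact (hdisj x h).symm
              · exact hJP x h x' h2 hxx
          have := hJmax _ hins
          rw [Finset.card_insert_of_notMem hjJ] at this
          omega
      choose φ hφ using hmeet
      have hφX : ∀ j : Fin b, j ∈ (Finset.univ : Finset (Fin b)) → φ j ∈ X :=
        fun j _ => (Finset.mem_inter.mp (hφ j)).2
      have hcount : X.card * xi' k d n < (Finset.univ : Finset (Fin b)).card := by
        have h2 : X.card * xi' k d n ≤ D * D * xi' k d n :=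
          Nat.mul_le_mul_right _ hXcard
        have h3 : D * D * xi' k d n = D ^ 2 * xi' k d n := by ring
        simp only [Finset.card_univ, Fintype.card_fin]
        omega
      obtain ⟨v, hvX, hvcard⟩ :=
        Finset.exists_lt_card_fiber_of_mul_lt_card_of_maps_to hφX hcount
      set Jv : Finset (Fin b) :=
        Finset.filter (fun j => φ j = v) Finset.univ with hJv
      have hvT : ∀ j ∈ Jv, v ∈ T j := by
        intro j hj
        have := (Finset.mem_inter.mp (hφ j)).1
        rw [(Finset.mem_filter.mp hj).2] at this
        exact this
      -- v lies in some U i0 with i0 in the first block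
      have hvW : v ∈ W := by
        obtain ⟨j, hjJ, hjT⟩ := Finset.mem_biUnion.mp hvX
        exact hTsubW j hjT
      obtain ⟨i0, -, hvU⟩ := Finset.mem_biUnion.mp hvW
      set istar : Fin (3 * k + 1 + (n + 1)) := Fin.castLE h1 i0 with histar
      set f' : Fin (3 * k + 1 + n) → Fin (3 * k + 1 + (n + 1)) :=
        fun i => Fin.succAbove istar i with hf'
      have hf'inj : Function.Injective f' := Fin.succAbove_right_injective
      set g' : Fin Jv.card → Fin b := fun i => ↑(Jv.orderIsoOfFin rfl i) with hg'
      have hg'inj : Function.Injective g' := fun x y hxy =>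
        (Jv.orderIsoOfFin rfl).injective (Subtype.coe_injective hxy)
      have hg'mem : ∀ i, g' i ∈ Jv := fun i => (Jv.orderIsoOfFin rfl i).2
      refine ih Jv.card (fun i => U (f' i)) (fun j => S (g' j))
        (hshyg.restrict hf'inj hg'inj) hvcard ?_
      intro j j' hjj
      show (S (g' j) ∩ S (g' j') ∩ Finset.univ.biUnion (fun i => U (f' i))).card ≤ n
      have hne : g' j ≠ g' j' := fun e => hjj (hg'inj e)
      have hold := hint (g' j) (g' j') hne
      have hvmem : v ∈ S (g' j) ∩ S (g' j') ∩ Finset.univ.biUnion U := by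
        refine Finset.mem_inter.mpr ⟨Finset.mem_inter.mpr
          ⟨hTsubS _ (hvT _ (hg'mem j)), hTsubS _ (hvT _ (hg'mem j'))⟩, ?_⟩
        exact Finset.mem_biUnion.mpr ⟨istar, Finset.mem_univ _, hvU⟩
      have hsub : S (g' j) ∩ S (g' j') ∩ Finset.univ.biUnion (fun i => U (f' i)) ⊆
          (S (g' j) ∩ S (g' j') ∩ Finset.univ.biUnion U).erase v := by
        intro x hx
        simp only [Finset.mem_inter, Finset.mem_biUnion, Finset.mem_univ, true_and] at hx
        obtain ⟨⟨hx1, hx2⟩, i, hxi⟩ := hx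
        refine Finset.mem_erase.mpr ⟨?_, Finset.mem_inter.mpr
          ⟨Finset.mem_inter.mpr ⟨hx1, hx2⟩,
            Finset.mem_biUnion.mpr ⟨f' i, Finset.mem_univ _, hxi⟩⟩⟩
        rintro rfl
        have hdisj := hshyg.2.2.2.2.2.1 (f' i) istar (Fin.succAbove_ne istar i)
        exact Finset.disjoint_left.mp hdisj hxi hvU
      have hcard := Finset.card_le_card hsub
      rw [Finset.card_erase_of_mem hvmem] at hcard
      omega
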